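/- For every natural number n, -4·∑_{k=0}^{2n} (-2)^k · binom(2n,k) / (k+1)^2 - 2·∑_{k=0}^{2n} (-2)^k · binom(2n,k) · H_k / (k+1) = 2·(H_{n+1} - 2·H_{2n+2})/(2n+1). -/

import Mathlib

/-!
Write `B g N = ∑_{k ≤ N} C(N,k) g k`. Absorption `(N+1) C(N,k)/(k+1) = C(N+1,k+1)` followed by
the hockey-stick identity gives `(N+1) B (g k/(k+1)) N = ∑_{m ≤ N} B g m`, so both sums of the
theorem become sums over `m ≤ 2n` of `T m = B ((-2)^k/(k+1)) m` and `W m = B ((-2)^k H_k) m`.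
Since `B (x^k) m = (1+x)^m`, a geometric sum gives `T m = (1 + (-1)^m)/(2(m+1))`, and Pascal's
rule gives `W (m+1) = -W m - 2 T m`. So `T` vanishes at odd `m`, the `W m` cancel in consecutive
pairs, and what is left is the odd harmonic sum `∑_{j ≤ n} 1/(2j+1) = H_{2n+2} - H_{n+1}/2`.
-/

open Finset

noncomputable def H (n : ℕ) : ℝ := ∑ i ∈ Finset.range n, 1 / ((i : ℝ) + 1)

lemma H_zero : H 0 = 0 := by simp [H]

lemma H_succ (n : ℕ) : H (n + 1) = H n + 1 / ((n : ℝ) + 1) := sum_range_succ _ _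

lemma H_two_mul (n : ℕ) : H (2 * n) = ∑ j ∈ range n, 1 / (2 * (j : ℝ) + 1) + H n / 2 := by
  induction n with
  | zero => simp [H_zero]
  | succ n ih =>
    rw [show 2 * (n + 1) = 2 * n + 1 + 1 by ring, H_succ, H_succ, ih, sum_range_succ, H_succ]
    push_cast
    field_simp
    ring

lemma sum_range_two_mul_add_one_eq_even_add_odd {M : Type*} [AddCommMonoid M] (f : ℕ → M)
    (n : ℕ) :
    ∑ m ∈ range (2 * n + 1), f m =
      ∑ j ∈ range (n + 1), f (2 * j) + ∑ j ∈ range n, f (2 * j + 1) := by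
  induction n with
  | zero => simp
  | succ n ih =>
    rw [show 2 * (n + 1) + 1 = 2 * n + 1 + 1 + 1 by ring, sum_range_succ, sum_range_succ, ih,
      sum_range_succ (fun j ↦ f (2 * j)) (n + 1), sum_range_succ (fun j ↦ f (2 * j + 1)) n,
      mul_add_one]
    abel

section BinomialTransform

variable {K : Type*}

def binomialTransform [Semiring K] (g : ℕ → K) (N : ℕ) : K :=
  ∑ k ∈ range (N + 1), (N.choose k : K) * g k

lemma binomialTransform_succ [Semiring K] (g : ℕ → K) (N : ℕ) :
    binomialTransform g (N + 1) =
      binomialTransform g N + binomialTransform (fun k ↦ g (k + 1)) N :=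
  sum_choose_succ_mul (fun k _ ↦ g k) N

lemma binomialTransform_pow [CommSemiring K] (x : K) (N : ℕ) :
    binomialTransform (x ^ ·) N = (x + 1) ^ N := by
  simp [binomialTransform, add_pow, mul_comm]

lemma sum_range_cast_choose_eq [Semiring K] (N k : ℕ) :
    ∑ m ∈ range (N + 1), (m.choose k : K) = (N + 1).choose (k + 1) := by
  induction N with
  | zero => cases k <;> simp [Nat.choose_eq_zero_of_lt]
  | succ N ih => rw [sum_range_succ, ih, Nat.choose_succ_succ' (N + 1), Nat.cast_add, add_comm]

variable [Field K] [CharZero K]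

lemma cast_add_one_mul_choose_div (N k : ℕ) :
    (N + 1 : K) * N.choose k / (k + 1) = (N + 1).choose (k + 1) := by
  rw [div_eq_iff (Nat.cast_add_one_ne_zero k)]
  exact_mod_cast Nat.add_one_mul_choose_eq N k

lemma add_one_mul_binomialTransform_div_succ (g : ℕ → K) (N : ℕ) :
    (N + 1) * binomialTransform (fun k ↦ g k / (k + 1)) N =
      ∑ m ∈ range (N + 1), binomialTransform g m := by
  calc (N + 1) * binomialTransform (fun k ↦ g k / (k + 1)) N
      = ∑ k ∈ range (N + 1), ((N + 1).choose (k + 1) : K) * g k := by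
        rw [binomialTransform, mul_sum]
        refine sum_congr rfl fun k _ ↦ ?_
        rw [← cast_add_one_mul_choose_div]
        ring
    _ = ∑ k ∈ range (N + 1), ∑ m ∈ range (N + 1), (m.choose k : K) * g k := by
        simp_rw [← sum_mul, sum_range_cast_choose_eq]
    _ = ∑ m ∈ range (N + 1), binomialTransform g m := by
        rw [sum_comm]
        refine sum_congr rfl fun m hm ↦ (sum_subset ?_ fun k _ hk ↦ ?_).symm
        · exact range_subset_range.2 (by simpa using hm)
        · rw [Nat.choose_eq_zero_of_lt (by simpa using hk), Nat.cast_zero, zero_mul]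

lemma mul_binomialTransform_pow_div_succ (x : K) (N : ℕ) :
    x * binomialTransform (fun k ↦ x ^ k / (k + 1)) N = ((x + 1) ^ (N + 1) - 1) / (N + 1) := by
  rw [eq_div_iff (Nat.cast_add_one_ne_zero N), mul_right_comm, mul_assoc,
    add_one_mul_binomialTransform_div_succ]
  simp_rw [binomialTransform_pow]
  rw [mul_comm, ← geom_sum_mul, add_sub_cancel_right]

end BinomialTransform

lemma binomialTransform_pow_mul_H_succ (x : ℝ) (N : ℕ) :
    binomialTransform (fun k ↦ x ^ k * H k) (N + 1) =
      (x + 1) * binomialTransform (fun k ↦ x ^ k * H k) N +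
        x * binomialTransform (fun k ↦ x ^ k / (k + 1)) N := by
  rw [binomialTransform_succ]
  simp only [binomialTransform, mul_sum, ← sum_add_distrib]
  refine sum_congr rfl fun k _ ↦ ?_
  rw [H_succ]
  ring

lemma binomialTransform_neg_two_pow_div_succ (m : ℕ) :
    binomialTransform (fun k ↦ (-2 : ℝ) ^ k / (k + 1)) m = (1 + (-1) ^ m) / (2 * (m + 1)) := by
  have h := mul_binomialTransform_pow_div_succ (-2 : ℝ) m
  rw [show (-2 : ℝ) + 1 = -1 by norm_num, pow_succ, eq_div_iff (by positivity)] at h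
  rw [eq_div_iff (by positivity)]
  linear_combination -h

lemma binomialTransform_neg_two_pow_div_succ_two_mul (j : ℕ) :
    binomialTransform (fun k ↦ (-2 : ℝ) ^ k / (k + 1)) (2 * j) = 1 / (2 * j + 1) := by
  rw [binomialTransform_neg_two_pow_div_succ, pow_mul, neg_one_sq, one_pow]
  push_cast
  field_simp
  ring

lemma binomialTransform_neg_two_pow_div_succ_two_mul_add_one (j : ℕ) :
    binomialTransform (fun k ↦ (-2 : ℝ) ^ k / (k + 1)) (2 * j + 1) = 0 := by
  rw [binomialTransform_neg_two_pow_div_succ, pow_succ, pow_mul, neg_one_sq, one_pow]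
  ring

lemma sum_range_binomialTransform_neg_two_pow_div_succ (n : ℕ) :
    ∑ m ∈ range (2 * n + 1), binomialTransform (fun k ↦ (-2 : ℝ) ^ k / (k + 1)) m =
      H (2 * n + 2) - H (n + 1) / 2 := by
  simp only [sum_range_two_mul_add_one_eq_even_add_odd,
    binomialTransform_neg_two_pow_div_succ_two_mul,
    binomialTransform_neg_two_pow_div_succ_two_mul_add_one, sum_const_zero, add_zero]
  rw [show 2 * n + 2 = 2 * (n + 1) by ring, H_two_mul]
  ring

lemma sum_range_binomialTransform_neg_two_pow_mul_H (n : ℕ) :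
    ∑ m ∈ range (2 * n + 1), binomialTransform (fun k ↦ (-2 : ℝ) ^ k * H k) m = 0 := by
  rw [sum_range_two_mul_add_one_eq_even_add_odd, sum_range_succ', add_right_comm,
    ← sum_add_distrib]
  have h0 : binomialTransform (fun k ↦ (-2 : ℝ) ^ k * H k) (2 * 0) = 0 := by
    simp [binomialTransform, H_zero]
  have hpair (j : ℕ) : binomialTransform (fun k ↦ (-2 : ℝ) ^ k * H k) (2 * (j + 1)) +
      binomialTransform (fun k ↦ (-2 : ℝ) ^ k * H k) (2 * j + 1) = 0 := by
    rw [mul_add_one, binomialTransform_pow_mul_H_succ,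
      binomialTransform_neg_two_pow_div_succ_two_mul_add_one]
    ring
  rw [sum_congr rfl fun j _ ↦ hpair j, sum_const_zero, h0, add_zero]

/-- The identity obtained by applying `d/dℓ` at `ℓ = 1/2` to the parametric
generalization of the Reed Dawson identity. -/
theorem stmt_8 (n : ℕ) :
    -4 * ∑ k ∈ Finset.range (2 * n + 1),
        (-2 : ℝ) ^ k * ((2 * n).choose k : ℝ) / ((k : ℝ) + 1) ^ 2
      - 2 * ∑ k ∈ Finset.range (2 * n + 1),
        (-2 : ℝ) ^ k * ((2 * n).choose k : ℝ) * H k / ((k : ℝ) + 1)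
    = 2 * (H (n + 1) - 2 * H (2 * n + 2)) / (2 * (n : ℝ) + 1) := by
  have hA_eq : ∑ k ∈ range (2 * n + 1),
      (-2 : ℝ) ^ k * ((2 * n).choose k : ℝ) / ((k : ℝ) + 1) ^ 2 =
        binomialTransform (fun k ↦ (-2 : ℝ) ^ k / (k + 1) / (k + 1)) (2 * n) :=
    sum_congr rfl fun k _ ↦ by field_simp
  have hB_eq : ∑ k ∈ range (2 * n + 1),
      (-2 : ℝ) ^ k * ((2 * n).choose k : ℝ) * H k / ((k : ℝ) + 1) =
        binomialTransform (fun k ↦ (-2 : ℝ) ^ k * H k / (k + 1)) (2 * n) :=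
    sum_congr rfl fun k _ ↦ by ring
  have hA := add_one_mul_binomialTransform_div_succ (fun k ↦ (-2 : ℝ) ^ k / (k + 1)) (2 * n)
  have hB := add_one_mul_binomialTransform_div_succ (fun k ↦ (-2 : ℝ) ^ k * H k) (2 * n)
  rw [sum_range_binomialTransform_neg_two_pow_div_succ] at hA
  rw [sum_range_binomialTransform_neg_two_pow_mul_H] at hB
  push_cast at hA hB
  rw [hA_eq, hB_eq, eq_div_iff (by positivity)]
  linear_combination -4 * hA - 2 * hB
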